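/- arXiv:1802.10044 — 7 statements merged into one kernel-verified Lean document; each statement's English description precedes it below -/
import Mathlib

section
/- Suppose φ, ψ : ℤ → ℂ satisfy the discrete Schrödinger equations -φ(n+2) - h(n)·φ(n+1) + a(n)·φ(n) = λ·φ(n) and -ψ(n+2) - h(n)·ψ(n+1) + a(n)·ψ(n) = b·ψ(n) for all n, with ψ nowhere zero. Define g(n) := ψ(n+1)/ψ(n), φ̂(n) := φ(n+1) - g(n)·φ(n), and ĥ(n) := h(n+1) + g(n+2) - g(n). Then -φ̂(n+2) - ĥ(n)·φ̂(n+1) + a(n)·φ̂(n) = λ·φ̂(n) for all n. -/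
/-!
With `g = ψ(· + 1) / ψ`, the equation for `ψ` becomes the Riccati equation
`g n * (h n + g (n + 1)) = a n - b`, which says that the operator
`L = -T² - h T + a` factors as `L - b = -(T + c) ∘ (T - g)` with `c n = h n + g (n + 1)`.
The transformed operator is the product in the other order,
`L̂ - b = -(T - g) ∘ (T + c)`, so `L̂ - b` is intertwined with `L - b` by `T - g`, and
`T - g` carries `λ`-eigenfunctions of `L` to `λ`-eigenfunctions of `L̂`.
-/

section Darboux

variable {R : Type*} [CommRing R]

def discreteSchrodinger (h a φ : ℤ → R) (n : ℤ) : R :=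
  -φ (n + 2) - h n * φ (n + 1) + a n * φ n

def darbouxTransform (g φ : ℤ → R) (n : ℤ) : R :=
  φ (n + 1) - g n * φ n

def darbouxCoeff (h g : ℤ → R) (n : ℤ) : R :=
  h (n + 1) + g (n + 2) - g n

theorem discreteSchrodinger_darbouxTransform_sub {h a g : ℤ → R} {b : R}
    (hric : ∀ n, g n * (h n + g (n + 1)) = a n - b) (φ : ℤ → R) (n : ℤ) :
    discreteSchrodinger (darbouxCoeff h g) a (darbouxTransform g φ) n
        - b * darbouxTransform g φ n =
      darbouxTransform g (fun m ↦ discreteSchrodinger h a φ m - b * φ m) n := by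
  have hric₁ := hric (n + 1)
  rw [show n + 1 + 1 = n + 2 by ring] at hric₁
  simp only [discreteSchrodinger, darbouxTransform, darbouxCoeff]
  rw [show n + 2 + 1 = n + 1 + 2 by ring, show n + 1 + 1 = n + 2 by ring]
  linear_combination φ (n + 1) * (hric₁ - hric n)

theorem discreteSchrodinger_darbouxTransform_eq {h a g φ : ℤ → R} {b lam : R}
    (hric : ∀ n, g n * (h n + g (n + 1)) = a n - b)
    (hφ : ∀ n, discreteSchrodinger h a φ n = lam * φ n) (n : ℤ) :
    discreteSchrodinger (darbouxCoeff h g) a (darbouxTransform g φ) n =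
      lam * darbouxTransform g φ n := by
  have := discreteSchrodinger_darbouxTransform_sub hric φ n
  simp only [darbouxTransform, hφ] at this ⊢
  linear_combination this

end Darboux

theorem riccati_of_discreteSchrodinger_eq {K : Type*} [Field K] {h a ψ g : ℤ → K} {b : K}
    (hψ : ∀ n, ψ n ≠ 0) (hψsol : ∀ n, discreteSchrodinger h a ψ n = b * ψ n)
    (hg : ∀ n, g n = ψ (n + 1) / ψ n) (n : ℤ) :
    g n * (h n + g (n + 1)) = a n - b := by
  have hsol := hψsol n
  rw [discreteSchrodinger, ← one_add_one_eq_two, ← add_assoc] at hsol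
  rw [hg, hg]
  field_simp [hψ n, hψ (n + 1)]
  linear_combination -hsol

/-- one-step Darboux transformation for the discrete Schrödinger
equation `-φ(n+2) - h(n)·φ(n+1) + a(n)·φ(n) = λ·φ(n)`. -/
theorem discrete_darboux_one_step
    (h a : ℤ → ℂ) (lam b : ℂ) (φ ψ : ℤ → ℂ)
    (hψ : ∀ n, ψ n ≠ 0)
    (hφsol : ∀ n, -φ (n + 2) - h n * φ (n + 1) + a n * φ n = lam * φ n)
    (hψsol : ∀ n, -ψ (n + 2) - h n * ψ (n + 1) + a n * ψ n = b * ψ n)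
    (g φh hh : ℤ → ℂ)
    (hg : ∀ n, g n = ψ (n + 1) / ψ n)
    (hφh : ∀ n, φh n = φ (n + 1) - g n * φ n)
    (hhh : ∀ n, hh n = h (n + 1) + g (n + 2) - g n) :
    ∀ n, -φh (n + 2) - hh n * φh (n + 1) + a n * φh n = lam * φh n := by
  obtain rfl : φh = darbouxTransform g φ := funext hφh
  obtain rfl : hh = darbouxCoeff h g := funext hhh
  exact discreteSchrodinger_darbouxTransform_eq
    (riccati_of_discreteSchrodinger_eq hψ hψsol hg) hφsol
end

section
/- Let w : ℤ × ℤ → ℂ satisfy the autonomous lattice potential KdV equation (w(n,m) - w(n+1,m+1))·(w(n+1,m) - w(n,m+1)) = a - b for all n, m, where a, b : ℂ are constants. Then the matrices N(n,m) = [[0, 1], [a - λ, -(w(n+2,m) - w(n,m))]] and M(n,m) = [[-(w(n,m+1) - w(n+1,m)), 1], [a - λ, -(w(n+1,m+1) - w(n,m))]] satisfy the discrete zero-curvature condition M(n+1,m)·N(n,m) = N(n,m+1)·M(n,m) for all n, m and all λ : ℂ. -/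
open Matrix

/-- Lax pair / discrete zero-curvature condition for the autonomous
lattice potential KdV equation. -/
theorem lpKdV_zero_curvature
    (w : ℤ → ℤ → ℂ) (a b : ℂ)
    (hw : ∀ n m : ℤ, (w n m - w (n + 1) (m + 1)) * (w (n + 1) m - w n (m + 1)) = a - b)
    (lam : ℂ)
    (N M : ℤ → ℤ → Matrix (Fin 2) (Fin 2) ℂ)
    (hN : ∀ n m, N n m = !![(0 : ℂ), 1; a - lam, -(w (n + 2) m - w n m)])
    (hM : ∀ n m, M n m = !![-(w n (m + 1) - w (n + 1) m), 1;
                            a - lam, -(w (n + 1) (m + 1) - w n m)]) :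
    ∀ n m : ℤ, M (n + 1) m * N n m = N n (m + 1) * M n m := by
  intro n m
  have h1 := hw n m
  have h2 := hw (n + 1) m
  have e0 : n + 1 + 1 = n + 2 := by ring
  rw [e0] at h2
  have e1 : n + 1 + 1 = n + 2 := by ring
  have e2 : n + 2 + 1 = n + 3 := by ring
  rw [hM, hN, hN, hM]
  ext i j
  fin_cases i <;> fin_cases j <;>
    simp [Matrix.mul_apply, Fin.sum_univ_succ, e1, e2] <;>
    first | ring1 | linear_combination h1 - h2
end

section
/- Let α, β, λ ∈ ℂ with α² = -a, β² = -b, κ² = -λ. Define w(n,m) = -(α·n + β·m + ξ) and ψ(n,m) = ρ⁺·(α+κ)ⁿ·(β+κ)ᵐ + ρ⁻·(α-κ)ⁿ·(β-κ)ᵐ for constants ξ, ρ⁺, ρ⁻ ∈ ℂ. Then: (i) w satisfies the lpKdV equation (w(n,m) - w(n+1,m+1))·(w(n+1,m) - w(n,m+1)) = a - b; (ii) ψ satisfies -ψ(n+2,m) - (w(n+2,m) - w(n,m))·ψ(n+1,m) + a·ψ(n,m) = λ·ψ(n,m); and (iii) ψ satisfies ψ(n,m+1) = ψ(n+1,m)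 - (w(n,m+1) - w(n+1,m))·ψ(n,m). -/
/-!
The seed `w` is affine in `n` and `m`, so every difference of `w` appearing in the lpKdV
equation and in its Lax pair is a constant, and lpKdV reduces to `β² - α² = a - b`.
The Lax pair is linear in `ψ`, so it suffices to check it on the plane waves
`(α + κ)ⁿ (β + κ)ᵐ` for both square roots `±κ` of `-λ`. On a plane wave the spatial
equation becomes `-(α + κ)² + 2α(α + κ) + a = λ`, i.e. `α² - κ² = λ - a`, and the temporal
one becomes `(α + κ) - (α - β) = β + κ`.
-/

def IsLpKdVSolution (a b : ℂ) (w : ℤ → ℤ → ℂ) : Prop :=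
  ∀ n m : ℤ, (w n m - w (n + 1) (m + 1)) * (w (n + 1) m - w n (m + 1)) = a - b

/-- The `n`-part of the Lax pair of lpKdV, a discrete Schrödinger problem. -/
def IsSpatialEigenfunction (a lam : ℂ) (w ψ : ℤ → ℤ → ℂ) : Prop :=
  ∀ n m : ℤ, -ψ (n + 2) m - (w (n + 2) m - w n m) * ψ (n + 1) m + a * ψ n m = lam * ψ n m

/-- The `m`-part of the Lax pair of lpKdV. -/
def IsTemporalEigenfunction (w ψ : ℤ → ℤ → ℂ) : Prop :=
  ∀ n m : ℤ, ψ n (m + 1) = ψ (n + 1) m - (w n (m + 1) - w (n + 1) m) * ψ n m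

noncomputable def planeWave (p q : ℂ) (n m : ℤ) : ℂ := p ^ n * q ^ m

section Linearity

variable {a lam c : ℂ} {w ψ φ : ℤ → ℤ → ℂ}

theorem IsSpatialEigenfunction.add (hψ : IsSpatialEigenfunction a lam w ψ)
    (hφ : IsSpatialEigenfunction a lam w φ) : IsSpatialEigenfunction a lam w (ψ + φ) := by
  intro n m
  simp only [Pi.add_apply]
  linear_combination hψ n m + hφ n m

theorem IsSpatialEigenfunction.smul (hψ : IsSpatialEigenfunction a lam w ψ) :
    IsSpatialEigenfunction a lam w (c • ψ) := by
  intro n m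
  simp only [Pi.smul_apply, smul_eq_mul]
  linear_combination c * hψ n m

theorem IsTemporalEigenfunction.add (hψ : IsTemporalEigenfunction w ψ)
    (hφ : IsTemporalEigenfunction w φ) : IsTemporalEigenfunction w (ψ + φ) := by
  intro n m
  simp only [Pi.add_apply]
  linear_combination hψ n m + hφ n m

theorem IsTemporalEigenfunction.smul (hψ : IsTemporalEigenfunction w ψ) :
    IsTemporalEigenfunction w (c • ψ) := by
  intro n m
  simp only [Pi.smul_apply, smul_eq_mul]
  linear_combination c * hψ n m

end Linearity

section AffineSeed

variable {a b lam α β κ ξ : ℂ} {w : ℤ → ℤ → ℂ}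

theorem isLpKdVSolution_of_affine (hw : ∀ n m : ℤ, w n m = -(α * n + β * m + ξ))
    (hα : α ^ 2 = -a) (hβ : β ^ 2 = -b) : IsLpKdVSolution a b w := by
  intro n m
  simp only [hw]
  push_cast
  linear_combination hβ - hα

-- Shifting an integer power needs a nonzero base: `0 ^ (-1) * 0 = 0 ≠ 1 = 0 ^ 0`.
theorem isSpatialEigenfunction_planeWave (hw : ∀ n m : ℤ, w n m = -(α * n + β * m + ξ))
    (hα : α ^ 2 = -a) (hκ : κ ^ 2 = -lam) (hακ : α + κ ≠ 0) (q : ℂ) :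
    IsSpatialEigenfunction a lam w (planeWave (α + κ) q) := by
  intro n m
  have hdiff : w (n + 2) m - w n m = -(2 * α) := by
    simp only [hw]
    push_cast
    ring
  rw [hdiff, planeWave, planeWave, planeWave, show n + 2 = n + 1 + 1 by ring,
    zpow_add_one₀ hακ, zpow_add_one₀ hακ]
  linear_combination ((α + κ) ^ n * q ^ m) * (hα - hκ)

theorem isTemporalEigenfunction_planeWave (hw : ∀ n m : ℤ, w n m = -(α * n + β * m + ξ))
    (hακ : α + κ ≠ 0) (hβκ : β + κ ≠ 0) :
    IsTemporalEigenfunction w (planeWave (α + κ) (β + κ)) := by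
  intro n m
  have hdiff : w n (m + 1) - w (n + 1) m = α - β := by
    simp only [hw]
    push_cast
    ring
  rw [hdiff, planeWave, planeWave, planeWave, zpow_add_one₀ hακ, zpow_add_one₀ hβκ]
  ring

end AffineSeed

/-- seed solution `w(n,m) = -(αn + βm + ξ)` of the autonomous lpKdV
equation together with its fixed eigenfunctions
`ψ(n,m) = ρ⁺(α+κ)ⁿ(β+κ)ᵐ + ρ⁻(α-κ)ⁿ(β-κ)ᵐ` solving the Lax pair. -/
theorem lpKdV_seed_and_eigenfunctions
    (a b lam α β κ ξ ρp ρm : ℂ)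
    (hα : α ^ 2 = -a) (hβ : β ^ 2 = -b) (hκ : κ ^ 2 = -lam)
    (hακ : α + κ ≠ 0) (hακ' : α - κ ≠ 0) (hβκ : β + κ ≠ 0) (hβκ' : β - κ ≠ 0)
    (w ψ : ℤ → ℤ → ℂ)
    (hw : ∀ n m : ℤ, w n m = -(α * n + β * m + ξ))
    (hψ : ∀ n m : ℤ, ψ n m = ρp * (α + κ) ^ n * (β + κ) ^ m
                            + ρm * (α - κ) ^ n * (β - κ) ^ m) :
    (∀ n m : ℤ, (w n m - w (n + 1) (m + 1)) * (w (n + 1) m - w n (m + 1)) = a - b) ∧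
    (∀ n m : ℤ, -ψ (n + 2) m - (w (n + 2) m - w n m) * ψ (n + 1) m + a * ψ n m
        = lam * ψ n m) ∧
    (∀ n m : ℤ, ψ n (m + 1) = ψ (n + 1) m - (w n (m + 1) - w (n + 1) m) * ψ n m) := by
  rw [sub_eq_add_neg] at hακ' hβκ'
  have hκ' : (-κ) ^ 2 = -lam := by rwa [neg_sq]
  have hψ_waves : ψ = ρp • planeWave (α + κ) (β + κ) + ρm • planeWave (α + -κ) (β + -κ) := by
    funext n m
    simp only [hψ, planeWave, Pi.add_apply, Pi.smul_apply, smul_eq_mul, ← sub_eq_add_neg]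
    ring
  subst hψ_waves
  refine ⟨isLpKdVSolution_of_affine hw hα hβ, ?_, ?_⟩
  · exact ((isSpatialEigenfunction_planeWave hw hα hκ hακ _).smul).add
      ((isSpatialEigenfunction_planeWave hw hα hκ' hακ' _).smul)
  · exact ((isTemporalEigenfunction_planeWave hw hακ hβκ).smul).add
      ((isTemporalEigenfunction_planeWave hw hακ' hβκ').smul)
end

section
/- Let ψ : ℤ → ℂ satisfy h(n)·ψ(n+2) + (1 + a(n+1)·h(n))·ψ(n+1) + a(n)·ψ(n) = b·ψ(n), with ψ(n+1) + a(n)·ψ(n) ≠ 0 for all n. Define B(n) := b·ψ(n)/(ψ(n+1) + a(n)·ψ(n)). Then B satisfies the discrete Riccati equation -(b - a(n)·B(n))·h(n) + (B(n) - 1)·B(n+1) = 0 for all n. -/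
/-!
The operator factors as `h·T² + (1 + ã·h)·T + a = (h·T + 1)(T + a)`. Writing
`φ = (T + a)ψ` (`rightFactor`), the spectral equation becomes `h·φ̃ + φ = b·ψ`,
so `B = b·ψ/φ` satisfies `B - 1 = h·φ̃/φ`, while `b - a·B = b·ψ̃/φ` and
`B̃ = b·ψ̃/φ̃`; multiplying out gives the Riccati equation.
-/

namespace Riccati

variable {K : Type*} [Field K]

def rightFactor (a ψ : ℤ → K) (n : ℤ) : K := ψ (n + 1) + a n * ψ n

theorem secondOrder_eq_leftFactor_rightFactor (h a ψ : ℤ → K) (n : ℤ) :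
    h n * ψ (n + 2) + (1 + a (n + 1) * h n) * ψ (n + 1) + a n * ψ n
      = h n * rightFactor a ψ (n + 1) + rightFactor a ψ n := by
  rw [rightFactor, rightFactor, show n + 1 + 1 = n + 2 by ring]
  ring

theorem div_rightFactor_sub_one {h a ψ : ℤ → K} {b : K} {n : ℤ}
    (hsol : h n * rightFactor a ψ (n + 1) + rightFactor a ψ n = b * ψ n)
    (hden : rightFactor a ψ n ≠ 0) :
    b * ψ n / rightFactor a ψ n - 1
      = h n * rightFactor a ψ (n + 1) / rightFactor a ψ n := by
  rw [← hsol, div_sub_one hden, add_sub_cancel_right]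

theorem sub_mul_div_rightFactor {a ψ : ℤ → K} {n : ℤ} (b : K)
    (hden : rightFactor a ψ n ≠ 0) :
    b - a n * (b * ψ n / rightFactor a ψ n) = b * ψ (n + 1) / rightFactor a ψ n := by
  rw [eq_div_iff hden, sub_mul, mul_assoc, div_mul_cancel₀ _ hden, rightFactor]
  ring

end Riccati

open Riccati in
/-- the function `B(n) = b·ψ(n)/(ψ(n+1) + a(n)·ψ(n))`, built from a
solution `ψ` of `h·T²ψ + (1+ã·h)·Tψ + a·ψ = b·ψ`, satisfies the discrete Riccati
equation `-(b - a·B)·h + (B - 1)·B̃ = 0`. -/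
theorem riccati_solution_case_II
    (h a : ℤ → ℂ) (b : ℂ) (ψ : ℤ → ℂ)
    (hsol : ∀ n, h n * ψ (n + 2) + (1 + a (n + 1) * h n) * ψ (n + 1) + a n * ψ n
              = b * ψ n)
    (hden : ∀ n, ψ (n + 1) + a n * ψ n ≠ 0)
    (B : ℤ → ℂ)
    (hB : ∀ n, B n = b * ψ n / (ψ (n + 1) + a n * ψ n)) :
    ∀ n, -(b - a n * B n) * h n + (B n - 1) * B (n + 1) = 0 := by
  intro n
  have hφ : ∀ m, rightFactor a ψ m ≠ 0 := hden
  have hfactored := secondOrder_eq_leftFactor_rightFactor h a ψ n ▸ hsol n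
  have hB' : ∀ m, B m = b * ψ m / rightFactor a ψ m := hB
  rw [hB' n, hB' (n + 1), div_rightFactor_sub_one hfactored (hφ n),
    sub_mul_div_rightFactor b (hφ n)]
  field_simp [hφ n, hφ (n + 1)]
  ring
end

section
/- Let φ, ψ : ℤ → ℂ satisfy h(n)·φ(n+2) + (1 + a(n+1)·h(n))·φ(n+1) + a(n)·φ(n) = λ·φ(n) and h(n)·ψ(n+2) + (1 + a(n+1)·h(n))·ψ(n+1) + a(n)·ψ(n) = b·ψ(n) for all n, with ψ(n+1) + a(n)·ψ(n) ≠ 0 and B(n) := b·ψ(n)/(ψ(n+1) + a(n)·ψ(n)) ≠ 0 for all n. Define φ̂(n) := B(n)·φ(n+1) + (a(n)·B(n) - b)·φ(n) and ĥ(n) := B(n)·h(n+1)/B(n+2). Then ĥ(n)·φ̂(n+2) + (1 + a(n+1)·ĥ(n))·φ̂(n+1) + a(n)·φ̂(n) = λ·φ̂(n) for all n. -/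
/-!
With `T` the shift, the operator factors as `L = (h T + 1)(T + a)`, and the transformed operator
is `(ĥ T + 1)(T + a)`: only the left factor changes. Put `χ = (T + a) ψ`, so `B χ = b ψ`. The
equation for `ψ` and the definition of `B` give `(B - 1) χ = h · Tχ` and `(b - a B) χ = TB · Tχ`,
and from these `h · (T + a) φ̂ = TB · (λ φ - B · (T + a) φ)`. Shifted once and multiplied by
`ĥ = B · Th / T²B`, this turns `ĥ · T(T + a) φ̂` into `B · (λ Tφ - TB · T(T + a) φ)`, and the
remaining terms of `(ĥ T + 1)(T + a) φ̂ - λ φ̂` cancel by the same two identities.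
-/

section Darboux

variable {K : Type*} [Field K]

def rightFactor (a f : ℤ → K) (n : ℤ) : K := f (n + 1) + a n * f n

def leftFactor (h g : ℤ → K) (n : ℤ) : K := h n * g (n + 1) + g n

theorem leftFactor_rightFactor (h a f : ℤ → K) (n : ℤ) :
    leftFactor h (rightFactor a f) n
      = h n * f (n + 2) + (1 + a (n + 1) * h n) * f (n + 1) + a n * f n := by
  simp only [leftFactor, rightFactor, add_assoc, one_add_one_eq_two]
  ring

variable {h a B φ ψ φh : ℤ → K} {b lam : K}

theorem sub_one_mul_rightFactor
    (hψ : ∀ n, leftFactor h (rightFactor a ψ) n = b * ψ n)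
    (hBψ : ∀ n, B n * rightFactor a ψ n = b * ψ n) (n : ℤ) :
    (B n - 1) * rightFactor a ψ n = h n * rightFactor a ψ (n + 1) := by
  simp only [leftFactor] at hψ
  linear_combination hBψ n - hψ n

theorem sub_mul_mul_rightFactor
    (hBψ : ∀ n, B n * rightFactor a ψ n = b * ψ n) (n : ℤ) :
    (b - a n * B n) * rightFactor a ψ n = B (n + 1) * rightFactor a ψ (n + 1) := by
  simp only [rightFactor] at hBψ ⊢
  linear_combination -a n * hBψ n - hBψ (n + 1)

theorem rightFactor_darboux
    (hφh : ∀ n, φh n = B n * φ (n + 1) + (a n * B n - b) * φ n) (n : ℤ) :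
    rightFactor a φh n
      = B (n + 1) * rightFactor a φ (n + 1) - (b - a n * B n) * rightFactor a φ n := by
  simp only [rightFactor, hφh]
  ring

theorem mul_rightFactor_darboux
    (hφ : ∀ n, leftFactor h (rightFactor a φ) n = lam * φ n)
    (hψ : ∀ n, leftFactor h (rightFactor a ψ) n = b * ψ n)
    (hBψ : ∀ n, B n * rightFactor a ψ n = b * ψ n)
    (hφh : ∀ n, φh n = B n * φ (n + 1) + (a n * B n - b) * φ n)
    {n : ℤ} (hχ : rightFactor a ψ n ≠ 0) :
    h n * rightFactor a φh n = B (n + 1) * (lam * φ n - B n * rightFactor a φ n) := by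
  refine mul_right_cancel₀ hχ ?_
  rw [rightFactor_darboux hφh]
  have hu := hφ n
  simp only [leftFactor] at hu
  linear_combination (B (n + 1) * rightFactor a ψ n) * hu
    + (B (n + 1) * rightFactor a φ n) * sub_one_mul_rightFactor hψ hBψ n
    - (h n * rightFactor a φ n) * sub_mul_mul_rightFactor hBψ n

theorem leftFactor_rightFactor_darboux {hh : ℤ → K}
    (hφ : ∀ n, leftFactor h (rightFactor a φ) n = lam * φ n)
    (hψ : ∀ n, leftFactor h (rightFactor a ψ) n = b * ψ n)
    (hBψ : ∀ n, B n * rightFactor a ψ n = b * ψ n)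
    (hφh : ∀ n, φh n = B n * φ (n + 1) + (a n * B n - b) * φ n)
    (hhh : ∀ n, hh n = B n * h (n + 1) / B (n + 2))
    {n : ℤ} (hχ₀ : rightFactor a ψ n ≠ 0) (hχ₁ : rightFactor a ψ (n + 1) ≠ 0)
    (hB₂ : B (n + 2) ≠ 0) :
    leftFactor hh (rightFactor a φh) n = lam * φh n := by
  have hshift : hh n * rightFactor a φh (n + 1)
      = B n * (lam * φ (n + 1) - B (n + 1) * rightFactor a φ (n + 1)) := by
    have key := mul_rightFactor_darboux hφ hψ hBψ hφh hχ₁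
    rw [add_assoc, one_add_one_eq_two] at key
    rw [hhh, div_mul_eq_mul_div, div_eq_iff hB₂]
    linear_combination B n * key
  have hu := hφ n
  simp only [leftFactor] at hu ⊢
  rw [hshift, rightFactor_darboux hφh, hφh n]
  refine mul_right_cancel₀ hχ₀ ?_
  linear_combination -(B (n + 1) * rightFactor a φ (n + 1))
      * sub_one_mul_rightFactor hψ hBψ n
    + (lam * φ n - rightFactor a φ n) * sub_mul_mul_rightFactor hBψ n
    - (B (n + 1) * rightFactor a ψ (n + 1)) * hu

end Darboux

/-- one-step Darboux transformation (Theorem 4 of the paper) for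
the second-order difference equation `h·T²φ + (1+ã·h)·Tφ + a·φ = λ·φ`. -/
theorem darboux_one_step_case_II
    (h a : ℤ → ℂ) (b lam : ℂ) (φ ψ : ℤ → ℂ)
    (hφsol : ∀ n, h n * φ (n + 2) + (1 + a (n + 1) * h n) * φ (n + 1) + a n * φ n
              = lam * φ n)
    (hψsol : ∀ n, h n * ψ (n + 2) + (1 + a (n + 1) * h n) * ψ (n + 1) + a n * ψ n
              = b * ψ n)
    (hden : ∀ n, ψ (n + 1) + a n * ψ n ≠ 0)
    (B : ℤ → ℂ)
    (hB : ∀ n, B n = b * ψ n / (ψ (n + 1) + a n * ψ n))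
    (hBne : ∀ n, B n ≠ 0)
    (φh hh : ℤ → ℂ)
    (hφh : ∀ n, φh n = B n * φ (n + 1) + (a n * B n - b) * φ n)
    (hhh : ∀ n, hh n = B n * h (n + 1) / B (n + 2)) :
    ∀ n, hh n * φh (n + 2) + (1 + a (n + 1) * hh n) * φh (n + 1) + a n * φh n
      = lam * φh n := by
  have hφ n : leftFactor h (rightFactor a φ) n = lam * φ n :=
    (leftFactor_rightFactor h a φ n).trans (hφsol n)
  have hψ n : leftFactor h (rightFactor a ψ) n = b * ψ n :=
    (leftFactor_rightFactor h a ψ n).trans (hψsol n)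
  have hBψ n : B n * rightFactor a ψ n = b * ψ n := by
    rw [hB n]
    exact div_mul_cancel₀ _ (hden n)
  intro n
  rw [← leftFactor_rightFactor]
  exact leftFactor_rightFactor_darboux hφ hψ hBψ hφh hhh (hden n) (hden (n + 1)) (hBne (n + 2))
end

section
/- Let w : ℤ × ℤ → ℂ be nowhere zero and let α, β ∈ ℂ \ {0}. Define A(n,m) := w(n,m)/(α·β·w(n+1,m+1)) and B(n,m) := β·w(n,m+1)/(α·w(n+1,m)). Then the relation A(n,m) = (B(n,m) - 1)/(β² - α²·B(n,m)) holds for all n, m (assuming β² - α²·B(n,m) ≠ 0) if and only if w satisfies the lattice potential modified KdV equation α·(w(n,m)·w(n,m+1) - w(n+1,m)·w(n+1,m+1)) = β·(w(n,m)·w(n+1,m) - w(n,m+1)·w(n+1,m+1)). -/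
/-! With `B = β ŵ / (α w̃)` the right-hand side `(B - 1)/(β² - α² B)` of the factorisation
relation is the Möbius expression `(β ŵ - α w̃) / (α β (β w̃ - α ŵ))`, so the relation says
`w (β w̃ - α ŵ) = ŵ̃ (β ŵ - α w̃)` after cancelling `α β`, which is lpmKdV rearranged. -/

section
variable {K : Type*} [Field K] {α β u u₁ u₂ u₁₂ : K}

theorem sq_sub_sq_mul_ratio (hu₁ : u₁ ≠ 0) :
    β ^ 2 - α ^ 2 * (β * u₂ / (α * u₁)) = β * (β * u₁ - α * u₂) / u₁ := by
  field_simp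

theorem ratio_sub_one (hα : α ≠ 0) (hu₁ : u₁ ≠ 0) :
    β * u₂ / (α * u₁) - 1 = (β * u₂ - α * u₁) / (α * u₁) := by
  field_simp

theorem factorisation_rhs_eq (hα : α ≠ 0) (hu₁ : u₁ ≠ 0) :
    (β * u₂ / (α * u₁) - 1) / (β ^ 2 - α ^ 2 * (β * u₂ / (α * u₁)))
      = (β * u₂ - α * u₁) / (α * β * (β * u₁ - α * u₂)) := by
  rw [ratio_sub_one hα hu₁, sq_sub_sq_mul_ratio hu₁, div_div_div_eq,
    show α * u₁ * (β * (β * u₁ - α * u₂)) = α * β * (β * u₁ - α * u₂) * u₁ by ring,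
    mul_div_mul_right _ _ hu₁]

theorem div_eq_mobius_iff_lpmKdV (hα : α ≠ 0) (hβ : β ≠ 0) (hu₁₂ : u₁₂ ≠ 0)
    (hd : β * u₁ - α * u₂ ≠ 0) :
    u / (α * β * u₁₂) = (β * u₂ - α * u₁) / (α * β * (β * u₁ - α * u₂)) ↔
      α * (u * u₂ - u₁ * u₁₂) = β * (u * u₁ - u₂ * u₁₂) := by
  have hαβ : α * β ≠ 0 := mul_ne_zero hα hβ
  rw [div_eq_div_iff (mul_ne_zero hαβ hu₁₂) (mul_ne_zero hαβ hd),
    show u * (α * β * (β * u₁ - α * u₂)) = α * β * (u * (β * u₁ - α * u₂)) by ring,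
    show (β * u₂ - α * u₁) * (α * β * u₁₂) = α * β * ((β * u₂ - α * u₁) * u₁₂) by ring,
    mul_right_inj' hαβ]
  constructor <;> intro h <;> linear_combination -h

theorem factorisation_iff_lpmKdV (hα : α ≠ 0) (hβ : β ≠ 0) (hu₁ : u₁ ≠ 0) (hu₁₂ : u₁₂ ≠ 0)
    (hden : β ^ 2 - α ^ 2 * (β * u₂ / (α * u₁)) ≠ 0) :
    u / (α * β * u₁₂) = (β * u₂ / (α * u₁) - 1) / (β ^ 2 - α ^ 2 * (β * u₂ / (α * u₁))) ↔
      α * (u * u₂ - u₁ * u₁₂) = β * (u * u₁ - u₂ * u₁₂) := by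
  rw [sq_sub_sq_mul_ratio hu₁] at hden
  have hd : β * u₁ - α * u₂ ≠ 0 := right_ne_zero_of_mul (div_ne_zero_iff.mp hden).1
  rw [factorisation_rhs_eq hα hu₁]
  exact div_eq_mobius_iff_lpmKdV hα hβ hu₁₂ hd

end

/-- with `A = w/(αβ·ŵ̃)` and `B = (β/α)·(ŵ/w̃)`, the Darboux
factorisation relation `A = (B-1)/(β² - α²·B)` holds for all `n, m` iff `w`
satisfies the lattice potential modified KdV equation. -/
theorem lpmKdV_from_factorisation
    (w : ℤ → ℤ → ℂ) (α β : ℂ)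
    (hw : ∀ n m, w n m ≠ 0) (hα : α ≠ 0) (hβ : β ≠ 0)
    (A B : ℤ → ℤ → ℂ)
    (hA : ∀ n m, A n m = w n m / (α * β * w (n + 1) (m + 1)))
    (hB : ∀ n m, B n m = β * w n (m + 1) / (α * w (n + 1) m))
    (hden : ∀ n m, β ^ 2 - α ^ 2 * B n m ≠ 0) :
    (∀ n m, A n m = (B n m - 1) / (β ^ 2 - α ^ 2 * B n m)) ↔
    (∀ n m, α * (w n m * w n (m + 1) - w (n + 1) m * w (n + 1) (m + 1))
          = β * (w n m * w (n + 1) m - w n (m + 1) * w (n + 1) (m + 1))) := by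
  refine forall_congr' fun n => forall_congr' fun m => ?_
  have hden' := hden n m
  rw [hB] at hden' ⊢
  rw [hA]
  exact factorisation_iff_lpmKdV hα hβ (hw _ _) (hw _ _) hden'
end

section
/- Let w : ℤ × ℤ → ℂ and z : ℤ × ℤ → ℂ be nowhere-zero/arbitrary functions related by the Miura-type transformation z(n+1,m) - z(n,m) = 1/(α·w(n,m)·w(n+1,m)) and z(n,m+1) - z(n,m) = 1/(β·w(n,m)·w(n,m+1)) for all n, m, where α, β ∈ ℂ \ {0} and w is nowhere zero. If w satisfies the lpmKdV equation α·(w·ŵ - w̃·ŵ̃) = β·(w·w̃ - ŵ·ŵ̃) at each point, then the two expressions for z(n+1,m+1) - z(n,m) obtained by the two paths agree (the transformation is compatible), and z satisfies the lattice Schwarzian KdV equation α²·(ẑ̃ - ẑ)·(z̃ - z) = β²·(ẑ̃ - z̃)·(ẑ - z). -/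
/-!
On an elementary square write `w, w₁, w₂, w₁₂` for `w, w̃, ŵ, ŵ̃` (and likewise for `z`).
Multiplying the difference of the two Miura path sums from `z` to `z₁₂` by `αβ w w₁ w₂ w₁₂`
gives the lpmKdV expression, so the relations are compatible exactly on lpmKdV solutions.
Along either path, the product of the two parallel edge differences weighted by the square of
their lattice parameter is `1 / (w w₁ w₂ w₁₂)`, which does not depend on the direction; this
is the lattice Schwarzian KdV equation.
-/

section Quad

variable {K : Type*} [Field K] {α β w w₁ w₂ w₁₂ : K}

theorem miura_compatible_iff_lpmKdV (hα : α ≠ 0) (hβ : β ≠ 0) (hw : w ≠ 0) (hw₁ : w₁ ≠ 0)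
    (hw₂ : w₂ ≠ 0) (hw₁₂ : w₁₂ ≠ 0) :
    1 / (α * w₂ * w₁₂) + 1 / (β * w * w₂) = 1 / (β * w₁ * w₁₂) + 1 / (α * w * w₁) ↔
      α * (w * w₂ - w₁ * w₁₂) = β * (w * w₁ - w₂ * w₁₂) := by
  field_simp
  constructor <;> intro h <;> linear_combination -h

theorem sq_mul_one_div_mul_one_div (hα : α ≠ 0) (a b c d : K) :
    α ^ 2 * (1 / (α * a * b)) * (1 / (α * c * d)) = (a * b * c * d)⁻¹ := by
  simp only [one_div, mul_inv]
  field_simp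

theorem lSKdV_of_miura {z z₁ z₂ z₁₂ : K} (hα : α ≠ 0) (hβ : β ≠ 0)
    (h₁ : z₁ - z = 1 / (α * w * w₁)) (h₂ : z₂ - z = 1 / (β * w * w₂))
    (h₁₂ : z₁₂ - z₂ = 1 / (α * w₂ * w₁₂)) (h₂₁ : z₁₂ - z₁ = 1 / (β * w₁ * w₁₂)) :
    α ^ 2 * (z₁₂ - z₂) * (z₁ - z) = β ^ 2 * (z₁₂ - z₁) * (z₂ - z) := by
  rw [h₁, h₂, h₁₂, h₂₁, sq_mul_one_div_mul_one_div hα, sq_mul_one_div_mul_one_div hβ]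
  ring

end Quad

/-- the Miura-type transformation
`z̃ - z = 1/(α·w·w̃)`, `ẑ - z = 1/(β·w·ŵ)` linking the lpmKdV equation to the
lattice Schwarzian KdV equation: if `w` solves lpmKdV, then the two expressions
for `ẑ̃ - z` agree (compatibility) and `z` solves the lSKdV equation with
parameters `a = α²`, `b = β²`. -/
theorem miura_lpmKdV_to_lSKdV
    (w z : ℤ → ℤ → ℂ) (α β : ℂ)
    (hw : ∀ n m, w n m ≠ 0) (hα : α ≠ 0) (hβ : β ≠ 0)
    (hm1 : ∀ n m, z (n + 1) m - z n m = 1 / (α * w n m * w (n + 1) m))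
    (hm2 : ∀ n m, z n (m + 1) - z n m = 1 / (β * w n m * w n (m + 1)))
    (hlpm : ∀ n m, α * (w n m * w n (m + 1) - w (n + 1) m * w (n + 1) (m + 1))
          = β * (w n m * w (n + 1) m - w n (m + 1) * w (n + 1) (m + 1))) :
    (∀ n m, 1 / (α * w n (m + 1) * w (n + 1) (m + 1)) + 1 / (β * w n m * w n (m + 1))
          = 1 / (β * w (n + 1) m * w (n + 1) (m + 1)) + 1 / (α * w n m * w (n + 1) m)) ∧
    (∀ n m, α ^ 2 * (z (n + 1) (m + 1) - z n (m + 1)) * (z (n + 1) m - z n m)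
          = β ^ 2 * (z (n + 1) (m + 1) - z (n + 1) m) * (z n (m + 1) - z n m)) :=
  ⟨fun n m => (miura_compatible_iff_lpmKdV hα hβ (hw n m) (hw (n + 1) m) (hw n (m + 1))
      (hw (n + 1) (m + 1))).2 (hlpm n m),
    fun n m => lSKdV_of_miura hα hβ (hm1 n m) (hm2 n m) (hm1 n (m + 1)) (hm2 (n + 1) m)⟩
end
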